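/- Consider one inner loop of SARAH (SARAH-IN) with each f_i L-smooth. For any t ≥ 1, E[||∇P(w_t) − v_t||²] ≤ (1/b)·((n−b)/(n−1))·L²η² · Σ_{j=1}^{t} E[||v_{j−1}||²]. -/

import Mathlib

/-!
Condition on every mini-batch except `I_{k+1}`: the state `(w_k, v_k)` is then fixed, and with
`x_i = ∇f_i(w_{k+1}) - ∇f_i(w_k)` the error `e_k = ∇P(w_k) - v_k` satisfies
`e_{k+1} = e_k + (x̄ - b⁻¹ ∑_{i ∈ I_{k+1}} x_i)`. Over a uniform `b`-subset the increment has mean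
zero and second moment `b⁻¹ (n - b)/(n - 1) · n⁻¹ ∑ ‖x_i - x̄‖²` (sampling without replacement:
a pair `i ≠ j` lies in a fraction `b(b-1)/(n(n-1))` of the subsets), and L-smoothness bounds
`‖x_i‖` by `L |η| ‖v_k‖`. So `E‖e_{k+1}‖² ≤ E‖e_k‖² + b⁻¹ (n - b)/(n - 1) L²η² E‖v_k‖²`, and
`e_0 = 0`.
-/

open scoped BigOperators

noncomputable section

/-- Vectors in `ℝ^d`. -/
abbrev Vec (d : ℕ) := EuclideanSpace ℝ (Fin d)

/-- The type of mini-batches of size `b` from `{1,…,n}` (modeled as `Fin n`). -/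
def Batch (n b : ℕ) : Type := {s : Finset (Fin n) // s.card = b}

instance (n b : ℕ) : Fintype (Batch n b) :=
  inferInstanceAs (Fintype {s : Finset (Fin n) // s.card = b})

/-- Expectation (uniform average) over a finite sample space. -/
def expec {Ω : Type*} [Fintype Ω] (F : Ω → ℝ) : ℝ :=
  (Fintype.card Ω : ℝ)⁻¹ * ∑ ω, F ω

/-- The SARAH-IN state `(w_t, v_t)` given a starting point `w0`, a learning rate `η`,
a batch size `b` and a sequence of mini-batches `I` (where `I t` is the batch used to
form `v_t`, for `t ≥ 1`). -/
def sarahState {d n : ℕ} (f : Fin n → Vec d → ℝ) (w0 : Vec d) (η : ℝ) (b : ℕ)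
    (I : ℕ → Finset (Fin n)) : ℕ → Vec d × Vec d
  | 0 => (w0, (n : ℝ)⁻¹ • ∑ i, gradient (f i) w0)
  | t + 1 =>
    let p := sarahState f w0 η b I t
    let w' := p.1 - η • p.2
    (w', (b : ℝ)⁻¹ • ∑ i ∈ I (t + 1), (gradient (f i) w' - gradient (f i) p.1) + p.2)

/-- Extend a finite sequence of mini-batches to all of `ℕ` (indices `≥ T` are irrelevant). -/
def pad {n b T : ℕ} (ω : Fin T → Batch n b) : ℕ → Finset (Fin n) :=
  fun t => if h : t < T then (ω ⟨t, h⟩).1 else ∅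

open Finset Function

section SamplingWithoutReplacement

variable {ι E : Type*} [Fintype ι] [NormedAddCommGroup E] [InnerProductSpace ℝ E]

theorem sum_norm_sub_mean_sq_le (x : ι → E) :
    ∑ i, ‖x i - (Fintype.card ι : ℝ)⁻¹ • ∑ j, x j‖ ^ 2 ≤ ∑ i, ‖x i‖ ^ 2 := by
  rcases isEmpty_or_nonempty ι with hι | hι
  · simp
  set n := (Fintype.card ι : ℝ)
  set m := n⁻¹ • ∑ j, x j
  have hsum : ∑ j, x j = n • m := (smul_inv_smul₀ (by positivity) _).symm
  have : ∑ i, ‖x i - m‖ ^ 2 = ∑ i, ‖x i‖ ^ 2 - n * ‖m‖ ^ 2 := by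
    simp_rw [norm_sub_sq_real, sum_add_distrib, sum_sub_distrib, ← mul_sum, ← sum_inner, hsum,
      real_inner_smul_left, real_inner_self_eq_norm_sq, sum_const, card_univ, nsmul_eq_mul]
    ring
  rw [this]
  exact sub_le_self _ (by positivity)

variable [DecidableEq ι]

theorem card_mul_card_filter_mem_powersetCard (b : ℕ) (i : ι) :
    Fintype.card ι * #{S ∈ powersetCard b (univ : Finset ι) | i ∈ S}
      = b * (Fintype.card ι).choose b := by
  have : Nonempty ι := ⟨i⟩
  obtain ⟨m, hm⟩ := Nat.exists_eq_add_one.2 (Fintype.card_pos (α := ι))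
  rcases b with _ | b
  · simp
  · have h := card_filter_powersetCard_subset {i} univ (b + 1) (subset_univ _) (by simp)
    simp only [singleton_subset_iff, card_singleton, card_univ, hm] at h
    rw [h, hm, add_tsub_cancel_right, add_tsub_cancel_right, Nat.add_one_mul_choose_eq, mul_comm]

theorem card_sub_one_mul_card_filter_mem_and_mem (b : ℕ) {i j : ι} (hij : i ≠ j) :
    ((Fintype.card ι : ℝ) - 1) * #{S ∈ powersetCard b (univ : Finset ι) | i ∈ S ∧ j ∈ S}
      = ((b : ℝ) - 1) * #{S ∈ powersetCard b (univ : Finset ι) | i ∈ S} := by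
  have hcard : #({i, j} : Finset ι) = 2 := card_pair hij
  obtain ⟨m, hm⟩ : ∃ m, Fintype.card ι = m + 2 :=
    Nat.exists_eq_add_of_le' (hcard ▸ card_le_univ {i, j})
  simp_rw [← singleton_subset_iff (a := j), ← insert_subset_iff, ← singleton_subset_iff (a := i)]
  rcases b with _ | _ | k
  · simp [filter_singleton]
  · rw [Nat.cast_one, sub_self, zero_mul, card_eq_zero.2, Nat.cast_zero, mul_zero]
    refine filter_eq_empty_iff.2 fun S hS hsub => ?_
    have := card_le_card hsub
    rw [hcard, mem_powersetCard_univ.1 hS] at this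
    omega
  · rw [card_filter_powersetCard_subset _ univ _ (subset_univ _) (by omega),
      card_filter_powersetCard_subset _ univ _ (subset_univ _) (by simp), hcard, card_singleton,
      card_univ, hm]
    simp only [add_tsub_cancel_right, Nat.reduceSubDiff]
    have h : ((m : ℝ) + 1) * m.choose k = (m + 1).choose (k + 1) * ((k : ℝ) + 1) := by
      exact_mod_cast Nat.add_one_mul_choose_eq m k
    push_cast
    linear_combination h

theorem card_mul_card_sub_one_mul_card_filter_mem_and_mem (b : ℕ) (i j : ι) :
    (Fintype.card ι : ℝ) * (Fintype.card ι - 1)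
        * #{S ∈ powersetCard b (univ : Finset ι) | i ∈ S ∧ j ∈ S}
      = (b : ℝ) * (b - 1) * (Fintype.card ι).choose b
        + if i = j then (b : ℝ) * (Fintype.card ι - b) * (Fintype.card ι).choose b else 0 := by
  have hi : (Fintype.card ι : ℝ) * #{S ∈ powersetCard b (univ : Finset ι) | i ∈ S}
      = b * (Fintype.card ι).choose b := by
    exact_mod_cast card_mul_card_filter_mem_powersetCard b i
  split_ifs with hij
  · subst hij
    simp only [and_self]
    linear_combination ((Fintype.card ι : ℝ) - 1) * hi
  · rw [add_zero, mul_assoc, card_sub_one_mul_card_filter_mem_and_mem b hij]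
    linear_combination ((b : ℝ) - 1) * hi

theorem sum_norm_sum_sq_eq_sum_card_mul_inner (𝒮 : Finset (Finset ι)) (y : ι → E) :
    ∑ S ∈ 𝒮, ‖∑ i ∈ S, y i‖ ^ 2
      = ∑ i, ∑ j, (#{S ∈ 𝒮 | i ∈ S ∧ j ∈ S} : ℝ) * inner ℝ (y i) (y j) := by
  have hS : ∀ S : Finset ι, ‖∑ i ∈ S, y i‖ ^ 2
      = ∑ i, ∑ j, if i ∈ S ∧ j ∈ S then inner ℝ (y i) (y j) else 0 := by
    intro S
    simp_rw [← real_inner_self_eq_norm_sq, sum_inner, inner_sum, ← Fintype.sum_ite_mem S, ite_and]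
    refine sum_congr rfl fun i _ => ?_
    split_ifs <;> simp
  simp_rw [hS]
  rw [sum_comm]
  refine sum_congr rfl fun i _ => ?_
  rw [sum_comm]
  refine sum_congr rfl fun j _ => ?_
  rw [← sum_filter, sum_const, nsmul_eq_mul]

theorem card_mul_card_sub_one_mul_sum_powersetCard_norm_sum_sq (b : ℕ) (y : ι → E) :
    (Fintype.card ι : ℝ) * (Fintype.card ι - 1)
        * ∑ S ∈ powersetCard b univ, ‖∑ i ∈ S, y i‖ ^ 2
      = (b : ℝ) * (b - 1) * (Fintype.card ι).choose b * ‖∑ i, y i‖ ^ 2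
        + (b : ℝ) * (Fintype.card ι - b) * (Fintype.card ι).choose b * ∑ i, ‖y i‖ ^ 2 := by
  rw [sum_norm_sum_sq_eq_sum_card_mul_inner, mul_sum]
  simp_rw [mul_sum, ← mul_assoc, card_mul_card_sub_one_mul_card_filter_mem_and_mem]
  simp_rw [add_mul, sum_add_distrib, ite_mul, zero_mul, sum_ite_eq, if_pos (mem_univ _)]
  simp_rw [← mul_sum, ← inner_sum, ← sum_inner, real_inner_self_eq_norm_sq]

theorem card_nsmul_sum_powersetCard_sum {M : Type*} [AddCommMonoid M] (b : ℕ) (y : ι → M) :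
    Fintype.card ι • ∑ S ∈ powersetCard b univ, ∑ i ∈ S, y i
      = (b * (Fintype.card ι).choose b) • ∑ i, y i := by
  rw [sum_congr rfl fun S _ => (Fintype.sum_ite_mem S y).symm, sum_comm, smul_sum, smul_sum]
  refine sum_congr rfl fun i _ => ?_
  rw [← sum_filter, sum_const, smul_smul, card_mul_card_filter_mem_powersetCard]

theorem sum_powersetCard_norm_sub_inv_smul_sum_sq (hn : 2 ≤ Fintype.card ι) (b : ℕ)
    {y : ι → E} (hy : ∑ i, y i = 0) (a : E) :
    ∑ S ∈ powersetCard b univ, ‖a - (b : ℝ)⁻¹ • ∑ i ∈ S, y i‖ ^ 2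
      = (Fintype.card ι).choose b * (‖a‖ ^ 2 + 1 / (b : ℝ)
          * ((Fintype.card ι - b) / (Fintype.card ι - 1))
          * ((Fintype.card ι : ℝ)⁻¹ * ∑ i, ‖y i‖ ^ 2)) := by
  set n := Fintype.card ι
  have hn0 : (n : ℝ) ≠ 0 := by positivity
  have hn1 : (n : ℝ) - 1 ≠ 0 := by
    have : (2 : ℝ) ≤ n := by exact_mod_cast hn
    linarith
  have hmean : ∑ S ∈ powersetCard b univ, ∑ i ∈ S, y i = 0 := by
    have h := card_nsmul_sum_powersetCard_sum b y
    rwa [hy, smul_zero, ← Nat.cast_smul_eq_nsmul ℝ, smul_eq_zero, or_iff_right hn0] at h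
  have hsq := card_mul_card_sub_one_mul_sum_powersetCard_norm_sum_sq b y
  rw [hy, norm_zero] at hsq
  have hX : ∑ S ∈ powersetCard b univ, ‖∑ i ∈ S, y i‖ ^ 2
      = b * ((n - b) / (n - 1) * ((n : ℝ)⁻¹ * ∑ i, ‖y i‖ ^ 2) * n.choose b) := by
    field_simp
    linear_combination hsq
  have hb : (b : ℝ)⁻¹ ^ 2 * b = (b : ℝ)⁻¹ := by
    rcases eq_or_ne (b : ℝ) 0 with hb | hb
    · simp [hb]
    · field_simp
  simp_rw [norm_sub_sq_real, sum_add_distrib, sum_sub_distrib, inner_smul_right, ← mul_sum,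
    ← inner_sum, hmean, inner_zero_right, norm_smul, mul_pow, ← mul_sum, sum_const,
    card_powersetCard, card_univ, nsmul_eq_mul]
  rw [hX, Real.norm_of_nonneg (by positivity), ← mul_assoc ((b : ℝ)⁻¹ ^ 2), hb]
  ring

theorem sum_powersetCard_norm_add_mean_sub_sq_le (hn : 2 ≤ Fintype.card ι) {b : ℕ} (hb : 1 ≤ b)
    (hbn : b ≤ Fintype.card ι) (a : E) (x : ι → E) :
    ∑ S ∈ powersetCard b univ,
        ‖a + ((Fintype.card ι : ℝ)⁻¹ • ∑ i, x i - (b : ℝ)⁻¹ • ∑ i ∈ S, x i)‖ ^ 2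
      ≤ (Fintype.card ι).choose b * (‖a‖ ^ 2 + 1 / (b : ℝ)
          * ((Fintype.card ι - b) / (Fintype.card ι - 1))
          * ((Fintype.card ι : ℝ)⁻¹ * ∑ i, ‖x i‖ ^ 2)) := by
  set n := Fintype.card ι
  set m := (n : ℝ)⁻¹ • ∑ i, x i
  have hn0 : (n : ℝ) ≠ 0 := by positivity
  have hb0 : (b : ℝ) ≠ 0 := by positivity
  have hy : ∑ i, (x i - m) = 0 := by
    rw [sum_sub_distrib, sum_const, card_univ, ← Nat.cast_smul_eq_nsmul ℝ, smul_inv_smul₀ hn0,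
      sub_self]
  have hS : ∀ S ∈ powersetCard b univ,
      a + (m - (b : ℝ)⁻¹ • ∑ i ∈ S, x i) = a - (b : ℝ)⁻¹ • ∑ i ∈ S, (x i - m) := by
    intro S hS
    rw [sum_sub_distrib, sum_const, mem_powersetCard_univ.1 hS, ← Nat.cast_smul_eq_nsmul ℝ,
      smul_sub, inv_smul_smul₀ hb0]
    abel
  rw [sum_congr rfl fun S h => by rw [hS S h], sum_powersetCard_norm_sub_inv_smul_sum_sq hn b hy a]
  have : (0 : ℝ) ≤ ((n : ℝ) - b) / (n - 1) := by
    have : (b : ℝ) ≤ n := by exact_mod_cast hbn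
    have : (2 : ℝ) ≤ n := by exact_mod_cast hn
    apply div_nonneg <;> linarith
  gcongr _ * (_ + _ * (_ * ?_))
  exact sum_norm_sub_mean_sq_le x

end SamplingWithoutReplacement

section Expectation

variable {Ω : Type*} [Fintype Ω]

theorem expec_mono {F G : Ω → ℝ} (h : ∀ ω, F ω ≤ G ω) : expec F ≤ expec G :=
  mul_le_mul_of_nonneg_left (sum_le_sum fun ω _ => h ω) (by positivity)

theorem expec_add_const_mul (F G : Ω → ℝ) (c : ℝ) :
    expec (fun ω => F ω + c * G ω) = expec F + c * expec G := by
  simp only [expec, sum_add_distrib, ← mul_sum]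
  ring

variable {ι B : Type*} [Fintype ι] [DecidableEq ι] [Fintype B]

theorem sum_sum_update {M : Type*} [AddCommMonoid M] (j : ι) (F : (ι → B) → M) :
    ∑ ω, ∑ s, F (update ω j s) = Fintype.card B • ∑ ω, F ω := by
  let e : Equiv.Perm ((ι → B) × B) :=
    Involutive.toPerm (fun p => (update p.1 j p.2, p.1 j)) fun p => by simp
  calc ∑ ω, ∑ s, F (update ω j s) = ∑ p, F (e p).1 := by
        rw [Fintype.sum_prod_type]; rfl
    _ = ∑ p : (ι → B) × B, F p.1 := Equiv.sum_comp e (fun p => F p.1)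
    _ = Fintype.card B • ∑ ω, F ω := by
      simp only [Fintype.sum_prod_type, sum_const, card_univ, smul_sum]

theorem expec_expec_update [Nonempty B] (j : ι) (F : (ι → B) → ℝ) :
    expec (fun ω => expec fun s => F (update ω j s)) = expec F := by
  simp only [expec, ← mul_sum, sum_sum_update, nsmul_eq_mul]
  rw [inv_mul_cancel_left₀ (by positivity)]

theorem expec_le_of_forall_expec_update_le [Nonempty B] (j : ι) {F G : (ι → B) → ℝ}
    (h : ∀ ω, expec (fun s => F (update ω j s)) ≤ G ω) : expec F ≤ expec G :=
  expec_expec_update j F ▸ expec_mono h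

end Expectation

theorem card_batch (n b : ℕ) : Fintype.card (Batch n b) = n.choose b := by
  change Fintype.card {S : Finset (Fin n) // #S = b} = _
  rw [Fintype.card_subtype, ← powerset_univ, ← powersetCard_eq_filter, card_powersetCard,
    card_univ, Fintype.card_fin]

theorem expec_batch {n b : ℕ} (g : Finset (Fin n) → ℝ) :
    expec (fun s : Batch n b => g s.1) = (n.choose b : ℝ)⁻¹ * ∑ S ∈ powersetCard b univ, g S := by
  rw [expec, card_batch]
  congr 1
  exact (sum_subtype _ (fun S => mem_powersetCard_univ) g).symm

theorem gradient_const_mul_sum {ι F : Type*} [Fintype ι] [NormedAddCommGroup F]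
    [InnerProductSpace ℝ F] [CompleteSpace F] {f : ι → F → ℝ} {w : F}
    (hf : ∀ i, DifferentiableAt ℝ (f i) w) (c : ℝ) :
    gradient (fun w => c * ∑ i, f i w) w = c • ∑ i, gradient (f i) w := by
  simp only [gradient, fderiv_const_mul (DifferentiableAt.fun_sum fun i _ => hf i),
    fderiv_fun_sum fun i _ => hf i, map_smul, map_sum]

theorem sum_norm_gradient_sub_sq_le {ι F : Type*} [Fintype ι] [NormedAddCommGroup F]
    [InnerProductSpace ℝ F] [CompleteSpace F] {f : ι → F → ℝ} {L : ℝ}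
    (hsmooth : ∀ i w w', ‖gradient (f i) w - gradient (f i) w'‖ ≤ L * ‖w - w'‖) (w w' : F) :
    ∑ i, ‖gradient (f i) w - gradient (f i) w'‖ ^ 2 ≤ Fintype.card ι * (L ^ 2 * ‖w - w'‖ ^ 2) := by
  simpa [mul_pow] using sum_le_card_nsmul univ _ _ fun i _ =>
    pow_le_pow_left₀ (norm_nonneg _) (hsmooth i w w') 2

theorem le_mul_sum_Icc_of_le_add_mul {a u : ℕ → ℝ} {c : ℝ} {t : ℕ} (h0 : a 0 ≤ 0)
    (hstep : ∀ k < t, a (k + 1) ≤ a k + c * u k) :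
    a t ≤ c * ∑ j ∈ Icc 1 t, u (j - 1) := by
  induction t with
  | zero => simpa using h0
  | succ t ih =>
    rw [sum_Icc_succ_top (by omega), add_tsub_cancel_right, mul_add]
    linarith [ih fun k hk => hstep k (by omega), hstep t (by omega)]

theorem pad_update_self {n b T r : ℕ} (ω : Fin T → Batch n b) (hr : r < T) (s : Batch n b) :
    pad (update ω ⟨r, hr⟩ s) r = s.1 := by
  simp [pad, hr]

theorem pad_update_of_ne {n b T r : ℕ} (ω : Fin T → Batch n b) (j : Fin T) (s : Batch n b)
    (hr : r ≠ j) : pad (update ω j s) r = pad ω r := by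
  unfold pad
  split_ifs with h
  · rw [update_of_ne (Fin.ne_of_val_ne hr)]
  · rfl

section SARAH

variable {d n : ℕ} (f : Fin n → Vec d → ℝ) (w0 : Vec d) (η : ℝ) (b : ℕ)

theorem sarahState_congr {I I' : ℕ → Finset (Fin n)} {k : ℕ} (h : ∀ r ≤ k, I r = I' r) :
    sarahState f w0 η b I k = sarahState f w0 η b I' k := by
  induction k with
  | zero => rfl
  | succ k ih => simp only [sarahState, ih fun r hr => h r (by omega), h (k + 1) le_rfl]

theorem gradient_sub_sarahState_succ {P : Vec d → ℝ}
    (hP : ∀ w, gradient P w = (n : ℝ)⁻¹ • ∑ i, gradient (f i) w) (I : ℕ → Finset (Fin n))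
    (k : ℕ) :
    let p := sarahState f w0 η b I k
    let x := fun i => gradient (f i) (p.1 - η • p.2) - gradient (f i) p.1
    gradient P (sarahState f w0 η b I (k + 1)).1 - (sarahState f w0 η b I (k + 1)).2
      = (gradient P p.1 - p.2) + ((n : ℝ)⁻¹ • ∑ i, x i - (b : ℝ)⁻¹ • ∑ i ∈ I (k + 1), x i) := by
  simp only [sarahState, hP, sum_sub_distrib, smul_sub]
  abel

variable {L : ℝ} {P : Vec d → ℝ}

theorem expec_sq_error_update_le (hn : 2 ≤ n) (hb : 1 ≤ b) (hbn : b ≤ n)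
    (hsmooth : ∀ i (w w' : Vec d), ‖gradient (f i) w - gradient (f i) w'‖ ≤ L * ‖w - w'‖)
    (hP : ∀ w, gradient P w = (n : ℝ)⁻¹ • ∑ i, gradient (f i) w)
    {T k : ℕ} (hk : k + 1 < T) (ω : Fin T → Batch n b) :
    let p := sarahState f w0 η b (pad ω) k
    expec (fun s => ‖gradient P (sarahState f w0 η b (pad (update ω ⟨k + 1, hk⟩ s)) (k + 1)).1
        - (sarahState f w0 η b (pad (update ω ⟨k + 1, hk⟩ s)) (k + 1)).2‖ ^ 2)
      ≤ ‖gradient P p.1 - p.2‖ ^ 2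
        + 1 / (b : ℝ) * ((n - b) / (n - 1)) * L ^ 2 * η ^ 2 * ‖p.2‖ ^ 2 := by
  intro p
  set j : Fin T := ⟨k + 1, hk⟩
  set x := fun i => gradient (f i) (p.1 - η • p.2) - gradient (f i) p.1
  have herr : ∀ s : Batch n b,
      gradient P (sarahState f w0 η b (pad (update ω j s)) (k + 1)).1
        - (sarahState f w0 η b (pad (update ω j s)) (k + 1)).2
      = (gradient P p.1 - p.2) + ((n : ℝ)⁻¹ • ∑ i, x i - (b : ℝ)⁻¹ • ∑ i ∈ s.1, x i) := by
    intro s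
    rw [gradient_sub_sarahState_succ f w0 η b hP, pad_update_self,
      sarahState_congr f w0 η b fun r hr => pad_update_of_ne ω j s (by simp [j]; omega)]
  have hx : (n : ℝ)⁻¹ * ∑ i, ‖x i‖ ^ 2 ≤ L ^ 2 * η ^ 2 * ‖p.2‖ ^ 2 := by
    rw [inv_mul_le_iff₀ (by positivity)]
    calc ∑ i, ‖x i‖ ^ 2 ≤ n * (L ^ 2 * ‖p.1 - η • p.2 - p.1‖ ^ 2) := by
          simpa using sum_norm_gradient_sub_sq_le hsmooth (p.1 - η • p.2) p.1
      _ = n * (L ^ 2 * η ^ 2 * ‖p.2‖ ^ 2) := by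
          rw [sub_sub_cancel_left, norm_neg, norm_smul, mul_pow, Real.norm_eq_abs, sq_abs]
          ring
  have hsample := sum_powersetCard_norm_add_mean_sub_sq_le (ι := Fin n) (by simpa) hb
    (by simpa) (gradient P p.1 - p.2) x
  simp only [Fintype.card_fin] at hsample
  have hC : (0 : ℝ) < n.choose b := by exact_mod_cast Nat.choose_pos hbn
  have hc : (0 : ℝ) ≤ 1 / (b : ℝ) * ((n - b) / (n - 1)) := by
    have : (b : ℝ) ≤ n := by exact_mod_cast hbn
    have : (2 : ℝ) ≤ n := by exact_mod_cast hn
    exact mul_nonneg (by positivity) (div_nonneg (by linarith) (by linarith))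
  simp_rw [herr]
  rw [expec_batch fun S => ‖(gradient P p.1 - p.2)
    + ((n : ℝ)⁻¹ • ∑ i, x i - (b : ℝ)⁻¹ • ∑ i ∈ S, x i)‖ ^ 2]
  calc (n.choose b : ℝ)⁻¹ * ∑ S ∈ powersetCard b univ,
        ‖(gradient P p.1 - p.2) + ((n : ℝ)⁻¹ • ∑ i, x i - (b : ℝ)⁻¹ • ∑ i ∈ S, x i)‖ ^ 2
      ≤ ‖gradient P p.1 - p.2‖ ^ 2
        + 1 / (b : ℝ) * ((n - b) / (n - 1)) * ((n : ℝ)⁻¹ * ∑ i, ‖x i‖ ^ 2) := by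
        rwa [inv_mul_le_iff₀ hC]
    _ ≤ _ := by linarith [mul_le_mul_of_nonneg_left hx hc]

theorem expec_sq_error_succ_le (hn : 2 ≤ n) (hb : 1 ≤ b) (hbn : b ≤ n)
    (hsmooth : ∀ i (w w' : Vec d), ‖gradient (f i) w - gradient (f i) w'‖ ≤ L * ‖w - w'‖)
    (hP : ∀ w, gradient P w = (n : ℝ)⁻¹ • ∑ i, gradient (f i) w)
    {T k : ℕ} (hk : k + 1 < T) :
    expec (fun ω : Fin T → Batch n b => ‖gradient P (sarahState f w0 η b (pad ω) (k + 1)).1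
        - (sarahState f w0 η b (pad ω) (k + 1)).2‖ ^ 2)
      ≤ expec (fun ω : Fin T → Batch n b => ‖gradient P (sarahState f w0 η b (pad ω) k).1
          - (sarahState f w0 η b (pad ω) k).2‖ ^ 2)
        + 1 / (b : ℝ) * ((n - b) / (n - 1)) * L ^ 2 * η ^ 2
          * expec (fun ω : Fin T → Batch n b => ‖(sarahState f w0 η b (pad ω) k).2‖ ^ 2) := by
  have : Nonempty (Batch n b) := Fintype.card_pos_iff.1 (card_batch n b ▸ Nat.choose_pos hbn)
  rw [← expec_add_const_mul]
  refine expec_le_of_forall_expec_update_le ⟨k + 1, hk⟩ fun ω => ?_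
  exact expec_sq_error_update_le f w0 η b hn hb hbn hsmooth hP hk ω

end SARAH

theorem sarah_in_variance_bound_general
    {d n : ℕ} (hn : 2 ≤ n)
    (f : Fin n → Vec d → ℝ) (L : ℝ)
    (hdiff : ∀ i, Differentiable ℝ (f i))
    (hsmooth : ∀ i (w w' : Vec d),
      ‖gradient (f i) w - gradient (f i) w'‖ ≤ L * ‖w - w'‖)
    (P : Vec d → ℝ) (hP : P = fun w => (n : ℝ)⁻¹ * ∑ i, f i w)
    (w0 : Vec d) (η : ℝ) (b : ℕ) (hb : 1 ≤ b) (hbn : b ≤ n)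
    (t : ℕ) :
    expec (fun ω : Fin (t + 1) → Batch n b =>
        ‖gradient P ((sarahState f w0 η b (pad ω) t).1)
          - (sarahState f w0 η b (pad ω) t).2‖ ^ 2)
      ≤ 1 / (b : ℝ) * (((n : ℝ) - (b : ℝ)) / ((n : ℝ) - 1)) * L ^ 2 * η ^ 2
          * ∑ j ∈ Finset.Icc 1 t,
              expec (fun ω : Fin (t + 1) → Batch n b =>
                ‖(sarahState f w0 η b (pad ω) (j - 1)).2‖ ^ 2) := by
  have hgrad : ∀ w, gradient P w = (n : ℝ)⁻¹ • ∑ i, gradient (f i) w := fun w => by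
    rw [hP]
    exact gradient_const_mul_sum (fun i => (hdiff i).differentiableAt) _
  refine le_mul_sum_Icc_of_le_add_mul
    (a := fun k => expec fun ω : Fin (t + 1) → Batch n b =>
      ‖gradient P (sarahState f w0 η b (pad ω) k).1 - (sarahState f w0 η b (pad ω) k).2‖ ^ 2)
    (u := fun k => expec fun ω : Fin (t + 1) → Batch n b =>
      ‖(sarahState f w0 η b (pad ω) k).2‖ ^ 2)
    ?_ fun k hk => expec_sq_error_succ_le f w0 η b hn hb hbn hsmooth hgrad (by omega)
  simp [sarahState, hgrad, expec]

/-- **Lemma 3 of SARAH (nonconvex).** For any `t ≥ 1`,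
`E‖∇P(w_t) − v_t‖² ≤ (1/b)·((n−b)/(n−1))·L²η² ∑_{j=1}^t E‖v_{j−1}‖²`. -/
theorem sarah_in_variance_bound
    {d n : ℕ} (hn : 2 ≤ n)
    (f : Fin n → Vec d → ℝ) (L : ℝ) (hL : 0 < L)
    (hdiff : ∀ i, Differentiable ℝ (f i))
    (hsmooth : ∀ i (w w' : Vec d),
      ‖gradient (f i) w - gradient (f i) w'‖ ≤ L * ‖w - w'‖)
    (P : Vec d → ℝ) (hP : P = fun w => (n : ℝ)⁻¹ * ∑ i, f i w)
    (w0 : Vec d) (η : ℝ) (hη : 0 < η) (b : ℕ) (hb : 1 ≤ b) (hbn : b ≤ n)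
    (t : ℕ) (ht : 1 ≤ t) :
    expec (fun ω : Fin (t + 1) → Batch n b =>
        ‖gradient P ((sarahState f w0 η b (pad ω) t).1)
          - (sarahState f w0 η b (pad ω) t).2‖ ^ 2)
      ≤ 1 / (b : ℝ) * (((n : ℝ) - (b : ℝ)) / ((n : ℝ) - 1)) * L ^ 2 * η ^ 2
          * ∑ j ∈ Finset.Icc 1 t,
              expec (fun ω : Fin (t + 1) → Batch n b =>
                ‖(sarahState f w0 η b (pad ω) (j - 1)).2‖ ^ 2) :=
  sarah_in_variance_bound_general hn f L hdiff hsmooth P hP w0 η b hb hbn t
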